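/- (Associativity of the reduced Dempster combination, implicit in the multi-view fusion M = M¹ ⊕ M² ⊕ ⋯ ⊕ Mⱽ) Let M¹, M², M³ be subjective opinions over K classes. Assume that the conflict of M¹ with M² is < 1, the conflict of (M¹ ⊕ M²) with M³ is < 1, the conflict of M² with M³ is < 1, and the conflict of M¹ with (M² ⊕ M³) is < 1. Then (M¹ ⊕ M²) ⊕ M³ = M¹ ⊕ (M² ⊕ M³), i.e. the combined belief masses and the combined uncertainty of the two triple fusions coincide. -/

import Mathlib

open Finset

/-- The conflict between two belief-mass assignments: `C = ∑_{i ≠ j} b₁ i * b₂ j`. -/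
noncomputable def conflict {K : ℕ} (b₁ b₂ : Fin K → ℝ) : ℝ :=
  ∑ i, ∑ j ∈ univ.filter (fun j => j ≠ i), b₁ i * b₂ j

/-- An opinion datum over `K` classes: a pair (belief masses, uncertainty mass). -/
abbrev Opinion (K : ℕ) := (Fin K → ℝ) × ℝ

/-- The reduced Dempster combination `M¹ ⊕ M²`. -/
noncomputable def comb {K : ℕ} (M₁ M₂ : Opinion K) : Opinion K :=
  (fun k => (M₁.1 k * M₂.1 k + M₁.1 k * M₂.2 + M₂.1 k * M₁.2) / (1 - conflict M₁.1 M₂.1),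
    (M₁.2 * M₂.2) / (1 - conflict M₁.1 M₂.1))

/-!
The numerator of `M¹ ⊕ M²` is bilinear and associative in the opinions, and when both opinions
have total mass `u + ∑ b = 1` the denominator `1 - C` is exactly the total mass of that numerator.
So `⊕` is "multiply, then normalize to total mass one", and since normalization commutes with
scaling either factor, both triple fusions equal the normalization of the same triple product.
-/

lemma conflict_eq_sum_mul_sum_sub {K : ℕ} (b₁ b₂ : Fin K → ℝ) :
    conflict b₁ b₂ = (∑ i, b₁ i) * (∑ j, b₂ j) - ∑ i, b₁ i * b₂ i := by
  have hrow : ∀ i, ∑ j ∈ univ.filter (fun j => j ≠ i), b₁ i * b₂ j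
      = b₁ i * ((∑ j, b₂ j) - b₂ i) := fun i => by
    rw [← Finset.mul_sum, Finset.filter_ne', Finset.sum_erase_eq_sub (mem_univ i)]
  simp_rw [conflict, hrow, mul_sub, Finset.sum_sub_distrib, ← Finset.sum_mul]

namespace Opinion

variable {K : ℕ}

def totalMass (M : Opinion K) : ℝ := M.2 + ∑ k, M.1 k

def combNum (M₁ M₂ : Opinion K) : Opinion K :=
  (fun k => M₁.1 k * M₂.1 k + M₁.1 k * M₂.2 + M₂.1 k * M₁.2, M₁.2 * M₂.2)

noncomputable def normalize (M : Opinion K) : Opinion K := (totalMass M)⁻¹ • M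

lemma totalMass_smul (c : ℝ) (M : Opinion K) : totalMass (c • M) = c * totalMass M := by
  simp [totalMass, Finset.mul_sum, mul_add]

lemma totalMass_normalize {M : Opinion K} (hM : totalMass M ≠ 0) :
    totalMass (normalize M) = 1 := by
  rw [normalize, totalMass_smul, inv_mul_cancel₀ hM]

lemma normalize_smul {c : ℝ} (hc : c ≠ 0) (M : Opinion K) : normalize (c • M) = normalize M := by
  rw [normalize, normalize, totalMass_smul, smul_smul, mul_inv, mul_right_comm,
    inv_mul_cancel₀ hc, one_mul]

lemma combNum_smul_left (c : ℝ) (M₁ M₂ : Opinion K) :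
    combNum (c • M₁) M₂ = c • combNum M₁ M₂ := by
  ext <;> simp [combNum] <;> ring

lemma combNum_smul_right (c : ℝ) (M₁ M₂ : Opinion K) :
    combNum M₁ (c • M₂) = c • combNum M₁ M₂ := by
  ext <;> simp [combNum] <;> ring

lemma combNum_assoc (M₁ M₂ M₃ : Opinion K) :
    combNum (combNum M₁ M₂) M₃ = combNum M₁ (combNum M₂ M₃) := by
  ext <;> simp [combNum] <;> ring

lemma totalMass_combNum (M₁ M₂ : Opinion K) :
    totalMass (combNum M₁ M₂) = totalMass M₁ * totalMass M₂ - conflict M₁.1 M₂.1 := by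
  simp only [totalMass, combNum, conflict_eq_sum_mul_sum_sub, Finset.sum_add_distrib,
    ← Finset.sum_mul]
  ring

lemma comb_eq_normalize_combNum {M₁ M₂ : Opinion K} (h₁ : totalMass M₁ = 1)
    (h₂ : totalMass M₂ = 1) : comb M₁ M₂ = normalize (combNum M₁ M₂) := by
  rw [normalize, totalMass_combNum, h₁, h₂, one_mul]
  ext <;> simp [comb, combNum, div_eq_inv_mul]

lemma normalize_combNum_normalize_left {M₁ : Opinion K} (h₁ : totalMass M₁ ≠ 0)
    (M₂ : Opinion K) : normalize (combNum (normalize M₁) M₂) = normalize (combNum M₁ M₂) := by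
  rw [normalize.eq_1 M₁, combNum_smul_left, normalize_smul (inv_ne_zero h₁)]

lemma normalize_combNum_normalize_right {M₂ : Opinion K} (h₂ : totalMass M₂ ≠ 0)
    (M₁ : Opinion K) : normalize (combNum M₁ (normalize M₂)) = normalize (combNum M₁ M₂) := by
  rw [normalize.eq_1 M₂, combNum_smul_right, normalize_smul (inv_ne_zero h₂)]

lemma totalMass_combNum_ne_zero {M₁ M₂ : Opinion K} (h₁ : totalMass M₁ = 1)
    (h₂ : totalMass M₂ = 1) (hC : conflict M₁.1 M₂.1 ≠ 1) : totalMass (combNum M₁ M₂) ≠ 0 := by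
  rw [totalMass_combNum, h₁, h₂, one_mul, sub_ne_zero]
  exact hC.symm

end Opinion

open Opinion in
theorem comb_assoc_general (K : ℕ) (M₁ M₂ M₃ : Opinion K)
    (hs₁ : M₁.2 + ∑ k, M₁.1 k = 1)
    (hs₂ : M₂.2 + ∑ k, M₂.1 k = 1)
    (hs₃ : M₃.2 + ∑ k, M₃.1 k = 1)
    (hC₁₂ : conflict M₁.1 M₂.1 < 1)
    (hC₂₃ : conflict M₂.1 M₃.1 < 1) :
    comb (comb M₁ M₂) M₃ = comb M₁ (comb M₂ M₃) := by
  have h₁₂ := totalMass_combNum_ne_zero hs₁ hs₂ hC₁₂.ne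
  have h₂₃ := totalMass_combNum_ne_zero hs₂ hs₃ hC₂₃.ne
  have hcomb₁₂ : totalMass (comb M₁ M₂) = 1 := by
    rw [comb_eq_normalize_combNum hs₁ hs₂, totalMass_normalize h₁₂]
  have hcomb₂₃ : totalMass (comb M₂ M₃) = 1 := by
    rw [comb_eq_normalize_combNum hs₂ hs₃, totalMass_normalize h₂₃]
  calc comb (comb M₁ M₂) M₃
      = normalize (combNum (normalize (combNum M₁ M₂)) M₃) := by
        rw [comb_eq_normalize_combNum hcomb₁₂ hs₃, comb_eq_normalize_combNum hs₁ hs₂]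
    _ = normalize (combNum M₁ (normalize (combNum M₂ M₃))) := by
        rw [normalize_combNum_normalize_left h₁₂, normalize_combNum_normalize_right h₂₃,
          combNum_assoc]
    _ = comb M₁ (comb M₂ M₃) := by
        rw [comb_eq_normalize_combNum hs₁ hcomb₂₃, comb_eq_normalize_combNum hs₂ hs₃]

/-- associativity of the reduced Dempster combination, under the conditions
that all the intermediate conflicts are `< 1`. -/
theorem comb_assoc (K : ℕ) (hK : 1 ≤ K) (M₁ M₂ M₃ : Opinion K)
    (hb₁ : ∀ k, 0 ≤ M₁.1 k) (hu₁ : 0 ≤ M₁.2) (hs₁ : M₁.2 + ∑ k, M₁.1 k = 1)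
    (hb₂ : ∀ k, 0 ≤ M₂.1 k) (hu₂ : 0 ≤ M₂.2) (hs₂ : M₂.2 + ∑ k, M₂.1 k = 1)
    (hb₃ : ∀ k, 0 ≤ M₃.1 k) (hu₃ : 0 ≤ M₃.2) (hs₃ : M₃.2 + ∑ k, M₃.1 k = 1)
    (hC₁₂ : conflict M₁.1 M₂.1 < 1)
    (hC₁₂₃ : conflict (comb M₁ M₂).1 M₃.1 < 1)
    (hC₂₃ : conflict M₂.1 M₃.1 < 1)
    (hC₁₂₃' : conflict M₁.1 (comb M₂ M₃).1 < 1) :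
    comb (comb M₁ M₂) M₃ = comb M₁ (comb M₂ M₃) :=
  comb_assoc_general K M₁ M₂ M₃ hs₁ hs₂ hs₃ hC₁₂ hC₂₃
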